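/- Fix n ≥ 1, d ≥ 2, k = ⌊d/2⌋, r = C(n+d,n) - 1. Let q ∈ P^r and S ⊂ P^n finite with ν_d(S) minimally spanning q. Assume |S| < C(n+k,n) and that S imposes |S| independent conditions on ℂ[z_0,…,z_n]_k. Let A ⊂ P^n be any finite set with |A| = |S| and q ∈ span(ν_d(A)). Then the space of degree-k forms vanishing on A equals the space of degree-k forms vanishing on S: H^0(I_A(k)) = H^0(I_S(k)) as subspaces of ℂ[z_0,…,z_n]_k. -/
import Mathlib


open MvPolynomial Function

/-- Complex projective `n`-space, as the projectivization of `ℂ^{n+1}`. -/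
abbrev Pn (n : ℕ) := Projectivization ℂ (Fin (n + 1) → ℂ)

/-- The linear span (as a vector subspace) of a set of projective points. -/
def pspan {V : Type*} [AddCommGroup V] [Module ℂ V] (E : Set (Projectivization ℂ V)) :
    Submodule ℂ V :=
  Submodule.span ℂ (Projectivization.rep '' E)

/-- `E` minimally spans `q`: `q` lies in the span of `E` but in the span of no proper subset. -/
def MinimallySpans {V : Type*} [AddCommGroup V] [Module ℂ V]
    (E : Set (Projectivization ℂ V)) (q : Projectivization ℂ V) : Prop :=
  q.rep ∈ pspan E ∧ ∀ E' ⊂ E, q.rep ∉ pspan E'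

/-- `E ⊂ P^n` imposes `|E|` independent conditions on degree-`t` forms:
the evaluation map from `ℂ[z_0,…,z_n]_t` to `ℂ^E` is surjective. -/
def ImposesIndep (n t : ℕ) (E : Set (Pn n)) : Prop :=
  Surjective (fun (g : homogeneousSubmodule (Fin (n + 1)) ℂ t) (p : E) =>
    eval (Projectivization.rep (p : Pn n)) (g : MvPolynomial (Fin (n + 1)) ℂ))

/-- The `d`-th power of the linear form with coefficient vector `v`. -/
noncomputable def linPow (n d : ℕ) (v : Fin (n + 1) → ℂ) : MvPolynomial (Fin (n + 1)) ℂ :=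
  (∑ i, C (v i) * X i) ^ d

/-- The span of the image under the degree-`d` Veronese embedding of a set `S ⊂ P^n`,
as a subspace of the polynomial ring. -/
noncomputable def veroneseSpan (n d : ℕ) (S : Set (Pn n)) : Submodule ℂ (MvPolynomial (Fin (n + 1)) ℂ) :=
  Submodule.span ℂ ((fun p : Pn n => linPow n d (Projectivization.rep p)) '' S)

/-- `ν_d(S)` minimally spans the point `q` of `P^r = P(ℂ[z_0,…,z_n]_d)`. -/
def MinSpansVer (n d : ℕ) (S : Set (Pn n))
    (q : Projectivization ℂ (homogeneousSubmodule (Fin (n + 1)) ℂ d)) : Prop :=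
  (Projectivization.rep q).1 ∈ veroneseSpan n d S ∧
    ∀ S' ⊂ S, (Projectivization.rep q).1 ∉ veroneseSpan n d S'

/-- `S ⊂ P^m` is in linearly general position: every subset of cardinality at most `m + 1`
is linearly independent. -/
def LGP (m : ℕ) (S : Set (Pn m)) : Prop :=
  ∀ B ⊆ S, B.Finite → B.ncard ≤ m + 1 →
    LinearIndependent ℂ (fun p : B => Projectivization.rep (p : Pn m))

/-- The evaluation linear map from degree-`t` forms to `ℂ^E`. -/
noncomputable def evalLM (n t : ℕ) (E : Set (Pn n)) :
    homogeneousSubmodule (Fin (n + 1)) ℂ t →ₗ[ℂ] (E → ℂ) where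
  toFun g p := eval (Projectivization.rep (p : Pn n)) g.1
  map_add' g₁ g₂ := by funext p; simp
  map_smul' c g := by funext p; simp [MvPolynomial.smul_eval]


/-! ### Auxiliary machinery -/

lemma linPow_eq (n d : ℕ) (v : Fin (n + 1) → ℂ) :
    linPow n d v = ∑ k ∈ Finset.piAntidiag Finset.univ d,
      monomial (Finsupp.equivFunOnFinite.symm k)
        ((Nat.multinomial Finset.univ k : ℂ) * ∏ i, v i ^ k i) := by
  rw [linPow, Finset.sum_pow_eq_sum_piAntidiag]
  refine Finset.sum_congr rfl fun k hk => ?_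
  rw [monomial_eq]
  have h1 : ((Finsupp.equivFunOnFinite.symm k).prod fun i e => (X i : MvPolynomial (Fin (n+1)) ℂ) ^ e)
      = ∏ i, (X i : MvPolynomial (Fin (n+1)) ℂ) ^ k i := by
    rw [Finsupp.prod]
    apply Finset.prod_subset (Finset.subset_univ _)
    intro i _ hi
    have : k i = 0 := by simpa using Finsupp.notMem_support_iff.mp hi
    simp [this]
  rw [h1]
  simp only [mul_pow, Finset.prod_mul_distrib, ← C_eq_coe_nat, ← C_pow, ← map_prod]
  rw [C_mul]
  ring

lemma coeff_linPow (n d : ℕ) (v : Fin (n + 1) → ℂ) (α : Fin (n + 1) →₀ ℕ)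
    (hα : ∑ i, α i = d) :
    coeff α (linPow n d v) = (Nat.multinomial Finset.univ ⇑α : ℂ) * ∏ i, v i ^ α i := by
  rw [linPow_eq, MvPolynomial.coeff_sum]
  rw [Finset.sum_eq_single ⇑α]
  · simp [coeff_monomial]
  · intro k hk hne
    rw [coeff_monomial, if_neg]
    intro hcon
    apply hne
    rw [← hcon]
    rfl
  · intro hmem
    exact absurd (by simp [Finset.mem_piAntidiag, hα]) hmem

noncomputable def lam {n : ℕ} (h : MvPolynomial (Fin (n + 1)) ℂ) :
    MvPolynomial (Fin (n + 1)) ℂ →ₗ[ℂ] ℂ :=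
  ∑ α ∈ h.support, (coeff α h * ((∏ i, Nat.factorial (α i) : ℕ) : ℂ)) • lcoeff ℂ α

lemma lam_apply {n : ℕ} (h F : MvPolynomial (Fin (n + 1)) ℂ) :
    lam h F = ∑ α ∈ h.support, coeff α h * ((∏ i, Nat.factorial (α i) : ℕ) : ℂ) * coeff α F := by
  simp [lam, lcoeff]

lemma lam_linPow {n d : ℕ} (h : MvPolynomial (Fin (n + 1)) ℂ) (hh : h.IsHomogeneous d)
    (v : Fin (n + 1) → ℂ) :
    lam h (linPow n d v) = (d.factorial : ℂ) * eval v h := by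
  rw [lam_apply, eval_eq', Finset.mul_sum]
  refine Finset.sum_congr rfl fun α hα => ?_
  have hdeg : ∑ i, α i = d := by
    have h1 : α.degree = d := by
      by_contra hcon
      exact (mem_support_iff.mp hα) (hh.coeff_eq_zero hcon)
    rw [← h1, Finsupp.degree]
    exact (Finset.sum_subset (Finset.subset_univ _) (fun i _ hi => by
      simpa using Finsupp.notMem_support_iff.mp hi)).symm
  rw [coeff_linPow _ _ _ _ hdeg]
  have hspec : ((∏ i, Nat.factorial (α i) : ℕ) : ℂ) * (Nat.multinomial Finset.univ ⇑α : ℂ)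
      = (d.factorial : ℂ) := by
    rw [← Nat.cast_mul, Nat.multinomial_spec, hdeg]
  linear_combination (coeff α h * ∏ i, v i ^ α i) * hspec

lemma verRep {n d : ℕ} {E : Set (Pn n)} {F : MvPolynomial (Fin (n + 1)) ℂ}
    (hF : F ∈ veroneseSpan n d E) :
    ∃ c : Pn n →₀ ℂ, ↑c.support ⊆ E ∧
      F = c.sum fun p a => a • linPow n d (Projectivization.rep p) := by
  rw [veroneseSpan, Finsupp.mem_span_image_iff_linearCombination] at hF
  obtain ⟨c, hc, hcF⟩ := hF
  exact ⟨c, Finsupp.mem_supported _ _ |>.mp hc, by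
    rw [← hcF, Finsupp.linearCombination_apply]⟩

lemma verRep_back {n d : ℕ} {E : Set (Pn n)} (c : Pn n →₀ ℂ) (hc : ↑c.support ⊆ E) :
    (c.sum fun p a => a • linPow n d (Projectivization.rep p)) ∈ veroneseSpan n d E := by
  rw [veroneseSpan, Finsupp.mem_span_image_iff_linearCombination]
  exact ⟨c, Finsupp.mem_supported _ _ |>.mpr hc, (Finsupp.linearCombination_apply _ _).symm⟩

lemma lam_rep {n d : ℕ} (h : MvPolynomial (Fin (n + 1)) ℂ) (hh : h.IsHomogeneous d)
    (c : Pn n →₀ ℂ) :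
    lam h (c.sum fun p a => a • linPow n d (Projectivization.rep p)) =
      ∑ p ∈ c.support, c p * ((d.factorial : ℂ) * eval (Projectivization.rep p) h) := by
  rw [map_finsuppSum, Finsupp.sum]
  refine Finset.sum_congr rfl fun p _ => ?_
  rw [map_smul, lam_linPow h hh, smul_eq_mul]

lemma vanish_transfer {n d : ℕ} {S A : Set (Pn n)}
    {F : MvPolynomial (Fin (n + 1)) ℂ}
    (hFS : F ∈ veroneseSpan n d S)
    (hminS : ∀ S' ⊂ S, F ∉ veroneseSpan n d S')
    (hind : ImposesIndep n (d / 2) S)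
    (hFA : F ∈ veroneseSpan n d A)
    (f : MvPolynomial (Fin (n + 1)) ℂ) (hf : f ∈ homogeneousSubmodule (Fin (n + 1)) ℂ (d / 2))
    (hvan : ∀ a ∈ A, eval (Projectivization.rep a) f = 0) :
    ∀ s ∈ S, eval (Projectivization.rep s) f = 0 := by
  intro s₀ hs₀
  classical
  obtain ⟨c, hcsupp, hcF⟩ := verRep hFS
  obtain ⟨b, hbsupp, hbF⟩ := verRep hFA
  have hcs₀ : c s₀ ≠ 0 := by
    intro h0
    apply hminS (S \ {s₀}) (Set.sdiff_singleton_ssubset.mpr hs₀)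
    rw [hcF]
    apply verRep_back
    intro p hp
    have hp' : c p ≠ 0 := Finsupp.mem_support_iff.mp hp
    refine ⟨hcsupp hp, ?_⟩
    simp only [Set.mem_singleton_iff]
    intro hps₀
    exact hp' (hps₀ ▸ h0)
  obtain ⟨f', hf'⟩ := hind (fun p : S => if (p : Pn n) = s₀ then 1 else 0)
  obtain ⟨i, hi⟩ : ∃ i, Projectivization.rep s₀ i ≠ 0 := by
    by_contra hcon; push_neg at hcon
    exact Projectivization.rep_nonzero s₀ (funext hcon)
  have h2k : d / 2 * 2 ≤ d := Nat.div_mul_le_self d 2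
  set m := d - 2 * (d / 2) with hm
  set h := f * ((f' : MvPolynomial (Fin (n + 1)) ℂ) * (X i) ^ m) with hh_def
  have hhom : h.IsHomogeneous d := by
    have h1 : f.IsHomogeneous (d / 2) := (mem_homogeneousSubmodule _ _).mp hf
    have h2 : (f' : MvPolynomial (Fin (n + 1)) ℂ).IsHomogeneous (d / 2) :=
      (mem_homogeneousSubmodule _ _).mp f'.2
    have h3 := isHomogeneous_X_pow (R := ℂ) i m
    have h4 := h1.mul (h2.mul h3)
    have hdeq : d / 2 + (d / 2 + m) = d := by omega
    rwa [hdeq] at h4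
  have hA0 : lam h F = 0 := by
    rw [hbF, lam_rep h hhom]
    apply Finset.sum_eq_zero
    intro p hp
    have hz : eval (Projectivization.rep p) f = 0 := hvan p (hbsupp hp)
    simp [hh_def, hz]
  have hS1 : lam h F = c s₀ * ((d.factorial : ℂ) *
      (eval (Projectivization.rep s₀) f * (Projectivization.rep s₀ i) ^ m)) := by
    rw [hcF, lam_rep h hhom, Finset.sum_eq_single s₀]
    · have he : eval (Projectivization.rep s₀) (f' : MvPolynomial (Fin (n + 1)) ℂ) = 1 := by
        have := congrFun hf' ⟨s₀, hs₀⟩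
        simpa using this
      simp [hh_def, he]
    · intro p hp hne
      have hpS : (p : Pn n) ∈ S := hcsupp hp
      have he : eval (Projectivization.rep p) (f' : MvPolynomial (Fin (n + 1)) ℂ) = 0 := by
        have := congrFun hf' ⟨p, hpS⟩
        simpa [hne] using this
      simp [hh_def, he]
    · intro habs
      exact absurd (Finsupp.mem_support_iff.mpr hcs₀) habs
  have hfac : (d.factorial : ℂ) ≠ 0 := Nat.cast_ne_zero.mpr d.factorial_ne_zero
  have hpow : (Projectivization.rep s₀ i) ^ m ≠ 0 := pow_ne_zero _ hi
  have hfin := hS1.symm.trans hA0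
  simpa [hcs₀, hfac, hpow, mul_eq_zero] using hfin

/-- Theorem 2: if `ν_d(S)` minimally spans `q`, `|S| < C(n+k,n)` with
`k = ⌊d/2⌋`, `S` imposes independent conditions on degree-`k` forms, and `A` has `|A| = |S|`
with `q ∈ span ν_d(A)`, then the degree-`k` forms vanishing on `A` coincide with the
degree-`k` forms vanishing on `S`. -/
theorem stmt_13 (n d : ℕ) (hn : 1 ≤ n) (hd : 2 ≤ d)
    (q : Projectivization ℂ (homogeneousSubmodule (Fin (n + 1)) ℂ d))
    (S : Set (Pn n)) (hS : S.Finite) (hmin : MinSpansVer n d S q)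
    (hcard : S.ncard < Nat.choose (n + d / 2) n)
    (hind : ImposesIndep n (d / 2) S)
    (A : Set (Pn n)) (hA : A.Finite) (hAcard : A.ncard = S.ncard)
    (hAspan : (Projectivization.rep q).1 ∈ veroneseSpan n d A) :
    ∀ g ∈ homogeneousSubmodule (Fin (n + 1)) ℂ (d / 2),
      (∀ a ∈ A, eval (Projectivization.rep a) g = 0) ↔
        (∀ s ∈ S, eval (Projectivization.rep s) g = 0) := by
  classical
  intro g hg
  haveI : Fintype ↥A := hA.fintype
  haveI : Fintype ↥S := hS.fintype
  set k := d / 2 with hk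
  set V := evalLM n k A with hV
  set W := evalLM n k S with hW
  have hdir1 : ∀ f ∈ homogeneousSubmodule (Fin (n + 1)) ℂ k,
      (∀ a ∈ A, eval (Projectivization.rep a) f = 0) →
        (∀ s ∈ S, eval (Projectivization.rep s) f = 0) :=
    fun f hf hv => vanish_transfer hmin.1 hmin.2 hind hAspan f hf hv
  have hker : LinearMap.ker V ≤ LinearMap.ker W := by
    intro x hx
    rw [LinearMap.mem_ker] at hx ⊢
    have hvA : ∀ a ∈ A, eval (Projectivization.rep a) x.1 = 0 := by
      intro a ha
      exact congrFun hx ⟨a, ha⟩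
    have hvS := hdir1 x.1 x.2 hvA
    funext p
    exact hvS p p.2
  have hsurjW : Surjective W := hind
  obtain ⟨L, hL⟩ := LinearMap.exists_extend
    (((LinearMap.ker V).liftQ W hker) ∘ₗ (V.quotKerEquivRange).symm.toLinearMap)
  have hfac : ∀ x, L (V x) = W x := by
    intro x
    have h1 : (⟨V x, LinearMap.mem_range_self V x⟩ : LinearMap.range V) =
        V.quotKerEquivRange (Submodule.Quotient.mk x) :=
      Subtype.ext (V.quotKerEquivRange_apply_mk x).symm
    have h2 : L (V x) = (L ∘ₗ (LinearMap.range V).subtype)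
        ⟨V x, LinearMap.mem_range_self V x⟩ := rfl
    rw [h2, hL, LinearMap.comp_apply, h1, LinearEquiv.coe_toLinearMap,
      LinearEquiv.symm_apply_apply, Submodule.liftQ_apply]
  have hsurjL : Surjective L := by
    intro y
    obtain ⟨x, hx⟩ := hsurjW y
    exact ⟨V x, by rw [hfac, hx]⟩
  have hrank : Module.finrank ℂ (↥A → ℂ) = Module.finrank ℂ (↥S → ℂ) := by
    rw [Module.finrank_pi, Module.finrank_pi]
    simp only [← Nat.card_eq_fintype_card, Nat.card_coe_set_eq]
    exact hAcard
  have hinjL : Injective L :=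
    (LinearMap.injective_iff_surjective_of_finrank_eq_finrank hrank).mpr hsurjL
  have hkerWV : LinearMap.ker W ≤ LinearMap.ker V := by
    intro x hx
    rw [LinearMap.mem_ker] at hx ⊢
    apply hinjL
    rw [hfac, hx, map_zero]
  constructor
  · intro hvA
    exact hdir1 g hg hvA
  · intro hvS a ha
    have hgker : (⟨g, hg⟩ : homogeneousSubmodule (Fin (n + 1)) ℂ k) ∈ LinearMap.ker W := by
      rw [LinearMap.mem_ker]
      funext p
      exact hvS p p.2
    have hx := hkerWV hgker
    rw [LinearMap.mem_ker] at hx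
    exact congrFun hx ⟨a, ha⟩
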